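/- arXiv:2210.12676 — 2 statements merged into one kernel-verified Lean document; each statement's English description precedes it below -/
import Mathlib

section
/- Let (M, M̃) be a Feller topological monoid. Then (M, ρ_{M̃}) is a topological monoid (the operation ⊕ is continuous for the metric ρ_{M̃}), and the extended metric space (M*, ρ_{M̃}), where M* = M ∪ {∂∞} and χ_n(∂∞) := 0 for all n, is a compact space. -/
open Filter Topology MeasureTheory

/-- A determining class of characters making `(M, S)` a Feller topological monoid:
`S` is a nonempty countable set of Borel-measurable characters `χ : M → [0,1]`,
closed under pointwise multiplication, such that for every sequence in `M`:
(i) all characters tend to `0` along the sequence iff the sequence tends to the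
point at infinity (the cocompact filter), and (ii) if all characters converge along
the sequence and the limit function is not identically zero, then the sequence
converges in `M` and the limits are the values of the characters at the limit point. -/
structure FellerClass (M : Type*) [TopologicalSpace M] [CommMonoid M]
    [MeasurableSpace M] (S : Set (M → ℝ)) : Prop where
  nonempty : S.Nonempty
  countable : S.Countable
  mem_Icc : ∀ χ ∈ S, ∀ x : M, χ x ∈ Set.Icc (0 : ℝ) 1
  map_one : ∀ χ ∈ S, χ 1 = 1
  map_mul : ∀ χ ∈ S, ∀ x y : M, χ (x * y) = χ x * χ y
  measurable : ∀ χ ∈ S, Measurable χ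
  mul_mem : ∀ χ₁ ∈ S, ∀ χ₂ ∈ S, (fun x => χ₁ x * χ₂ x) ∈ S
  tendsto_zero_iff : ∀ x : ℕ → M,
    (∀ χ ∈ S, Tendsto (fun n => χ (x n)) atTop (𝓝 0)) ↔
      Tendsto x atTop (cocompact M)
  limit_exists : ∀ (x : ℕ → M) (ψ : (M → ℝ) → ℝ),
    (∀ χ ∈ S, Tendsto (fun n => χ (x n)) atTop (𝓝 (ψ χ))) →
    (∃ χ ∈ S, ψ χ ≠ 0) →
    ∃ a : M, Tendsto x atTop (𝓝 a) ∧ ∀ χ ∈ S, ψ χ = χ a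

/-- The metric `ρ_{M̃}(x,y) = ∑_{n≥1} 2^{-n} |χ_n x - χ_n y|` associated with an
enumeration `(χ_n)` of the determining class (here indexed by `ℕ` starting at `0`,
with weights `2^{-(n+1)}`). -/
noncomputable def rhoDist {X : Type*} (e : ℕ → X → ℝ) (x y : X) : ℝ :=
  ∑' n : ℕ, |e n x - e n y| / 2 ^ (n + 1)

/-- The topology induced by the metric `rhoDist e`: the topology generated
by the open balls of `rhoDist e`. -/
def rhoTopology {X : Type*} (e : ℕ → X → ℝ) : TopologicalSpace X :=
  TopologicalSpace.generateFrom
    {U | ∃ (x : X) (ε : ℝ), 0 < ε ∧ U = {y | rhoDist e x y < ε}}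

namespace RhoAux

variable {X : Type*} (e : ℕ → X → ℝ)

lemma abs_le_one (hb : ∀ n x, e n x ∈ Set.Icc (0:ℝ) 1) (n : ℕ) (x y : X) :
    |e n x - e n y| ≤ 1 := by
  have h1 := hb n x; have h2 := hb n y
  rw [Set.mem_Icc] at h1 h2
  rw [abs_le]; constructor <;> linarith

lemma term_le (hb : ∀ n x, e n x ∈ Set.Icc (0:ℝ) 1) (n : ℕ) (x y : X) :
    |e n x - e n y| / 2 ^ (n + 1) ≤ ((1:ℝ)/2) ^ n := by
  have h2 : ((1:ℝ)/2) ^ n = 1 / 2 ^ n := by rw [div_pow, one_pow]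
  rw [h2]
  calc |e n x - e n y| / 2 ^ (n + 1) ≤ 1 / 2 ^ (n + 1) :=
        div_le_div₀ zero_le_one (abs_le_one e hb n x y) (by positivity) le_rfl
    _ ≤ 1 / 2 ^ n :=
        one_div_le_one_div_of_le (by positivity) (pow_le_pow_right₀ one_le_two n.le_succ)

lemma summ (hb : ∀ n x, e n x ∈ Set.Icc (0:ℝ) 1) (x y : X) :
    Summable (fun n => |e n x - e n y| / 2 ^ (n + 1)) :=
  Summable.of_nonneg_of_le (fun n => by positivity) (fun n => term_le e hb n x y)
    summable_geometric_two

noncomputable def pm (hb : ∀ n x, e n x ∈ Set.Icc (0:ℝ) 1) : PseudoMetricSpace X where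
  dist x y := rhoDist e x y
  dist_self x := by simp [rhoDist]
  dist_comm x y := by
    simp only [rhoDist]
    exact tsum_congr fun n => by rw [abs_sub_comm]
  dist_triangle x y z := by
    show rhoDist e x z ≤ rhoDist e x y + rhoDist e y z
    unfold rhoDist
    rw [← Summable.tsum_add (summ e hb x y) (summ e hb y z)]
    refine Summable.tsum_le_tsum (fun n => ?_) (summ e hb x z)
      ((summ e hb x y).add (summ e hb y z))
    rw [← add_div]
    gcongr
    exact abs_sub_le _ _ _

section PM

variable (hb : ∀ n x, e n x ∈ Set.Icc (0:ℝ) 1)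

lemma dist_eq (x y : X) : @dist X (pm e hb).toDist x y = rhoDist e x y := rfl

lemma term_le_dist (k : ℕ) (x y : X) :
    |e k x - e k y| / 2 ^ (k + 1) ≤ @dist X (pm e hb).toDist x y := by
  rw [dist_eq]
  exact Summable.le_tsum (summ e hb x y) k (fun j _ => by positivity)

/-- pm-convergence implies character convergence. -/
lemma char_tendsto {w : ℕ → X} {a : X}
    (h : Tendsto w atTop (@nhds X (pm e hb).toUniformSpace.toTopologicalSpace a)) (k : ℕ) :
    Tendsto (fun n => e k (w n)) atTop (𝓝 (e k a)) := by
  letI := pm e hb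
  have hd : Tendsto (fun n => dist (w n) a) atTop (𝓝 0) :=
    tendsto_iff_dist_tendsto_zero.mp h
  rw [tendsto_iff_dist_tendsto_zero]
  have hsq : Tendsto (fun n => (2:ℝ) ^ (k+1) * dist (w n) a) atTop (𝓝 0) := by
    simpa using hd.const_mul ((2:ℝ) ^ (k+1))
  refine squeeze_zero (fun n => dist_nonneg) (fun n => ?_) hsq
  rw [Real.dist_eq]
  have := term_le_dist e hb k (w n) a
  rw [div_le_iff₀ (by positivity : (0:ℝ) < 2 ^ (k+1))] at this
  linarith [this]

/-- character convergence implies pm-convergence. -/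
lemma tendsto_pm {w : ℕ → X} {a : X}
    (h : ∀ k, Tendsto (fun n => e k (w n)) atTop (𝓝 (e k a))) :
    Tendsto w atTop (@nhds X (pm e hb).toUniformSpace.toTopologicalSpace a) := by
  letI := pm e hb
  rw [tendsto_iff_dist_tendsto_zero]
  have key : Tendsto (fun n => ∑' k, |e k (w n) - e k a| / 2 ^ (k+1)) atTop
      (𝓝 (∑' _ : ℕ, (0:ℝ))) := by
    refine tendsto_tsum_of_dominated_convergence summable_geometric_two (fun k => ?_)
      (Eventually.of_forall fun n k => ?_)
    · have : Tendsto (fun n => |e k (w n) - e k a| / 2 ^ (k+1)) atTop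
          (𝓝 (|e k a - e k a| / 2 ^ (k+1))) :=
        (((h k).sub tendsto_const_nhds).abs).div_const _
      simpa using this
    · rw [Real.norm_eq_abs, abs_of_nonneg (by positivity)]
      exact term_le e hb k (w n) a
  rw [tsum_zero] at key
  exact key

lemma topo_eq :
    (pm e hb).toUniformSpace.toTopologicalSpace = rhoTopology e := by
  letI := pm e hb
  refine le_antisymm ?_ ?_
  · rw [rhoTopology, TopologicalSpace.le_generateFrom_iff_subset_isOpen]
    rintro U ⟨x, ε, hε, rfl⟩
    have hc : Continuous fun y => rhoDist e x y := by
      have : (fun y => rhoDist e x y) = fun y => dist x y := rfl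
      rw [this]
      exact continuous_const.dist continuous_id
    exact isOpen_Iio.preimage hc
  · rw [TopologicalSpace.le_def]
    intro s hs
    have hs' : IsOpen s := hs
    have key : ∀ x ∈ s, ∃ ε : ℝ, 0 < ε ∧ {y | rhoDist e x y < ε} ⊆ s := by
      intro x hx
      obtain ⟨ε, hε, hball⟩ := Metric.isOpen_iff.mp hs' x hx
      refine ⟨ε, hε, fun y hy => hball ?_⟩
      rw [Metric.mem_ball, dist_comm]
      exact hy
    show TopologicalSpace.GenerateOpen {U | ∃ x ε, 0 < ε ∧ U = {y | rhoDist e x y < ε}} s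
    have hrepr : s = ⋃₀ {U | (∃ x ε, 0 < ε ∧ U = {y | rhoDist e x y < ε}) ∧ U ⊆ s} := by
      apply Set.Subset.antisymm
      · intro x hx
        obtain ⟨ε, hε, hsub⟩ := key x hx
        refine ⟨{y | rhoDist e x y < ε}, ⟨⟨x, ε, hε, rfl⟩, hsub⟩, ?_⟩
        have h0 : rhoDist e x x = 0 := (pm e hb).dist_self x
        show rhoDist e x x < ε
        rw [h0]; exact hε
      · rintro x ⟨U, ⟨_, hUs⟩, hxU⟩
        exact hUs hxU
    rw [hrepr]
    exact .sUnion _ fun U hU => .basic U hU.1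

end PM

end RhoAux

-- glue lemmas appended to aux for testing
section Glue
namespace RhoAux
variable {X : Type*} (e : ℕ → X → ℝ) (hb : ∀ n x, e n x ∈ Set.Icc (0:ℝ) 1)
include hb

lemma tau_le [τ : TopologicalSpace X] (hcont : ∀ k, Continuous (e k)) :
    τ ≤ rhoTopology e := by
  rw [rhoTopology, TopologicalSpace.le_generateFrom_iff_subset_isOpen]
  rintro U ⟨x, ε, hε, rfl⟩
  have hc : Continuous fun y => rhoDist e x y := by
    refine continuous_tsum
      (fun i => ((continuous_const.sub (hcont i)).abs.div_const _))
      summable_geometric_two (fun i y => ?_)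
    rw [Real.norm_eq_abs, abs_of_nonneg (by positivity)]
    exact term_le e hb i x y
  have hU : {y | rhoDist e x y < ε} = (fun y => rhoDist e x y) ⁻¹' Set.Iio ε := rfl
  rw [hU]
  exact isOpen_Iio.preimage hc

lemma rho_le (τ : TopologicalSpace X)
    (hconv : ∀ (w : ℕ → X) (a : X),
      (∀ k, Tendsto (fun n => e k (w n)) atTop (𝓝 (e k a))) →
      Tendsto w atTop (@nhds X τ a)) :
    rhoTopology e ≤ τ := by
  rw [← topo_eq e hb]
  letI := pm e hb
  intro s hs
  refine (@Metric.isOpen_iff X (pm e hb) s).mpr ?_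
  intro x hx
  by_contra hcon
  push_neg at hcon
  have hy : ∀ n : ℕ, ∃ z, dist z x < 1/(n+1) ∧ z ∉ s := by
    intro n
    have hpos : (0:ℝ) < 1/(n+1) := by positivity
    have hns := hcon (1/(n+1)) hpos
    obtain ⟨z, hz1, hz2⟩ := Set.not_subset.mp hns
    exact ⟨z, Metric.mem_ball.mp hz1, hz2⟩
  choose y hy1 hy2 using hy
  have hd : Tendsto (fun n => dist (y n) x) atTop (𝓝 0) := by
    refine squeeze_zero (fun n => dist_nonneg) (fun n => (hy1 n).le) ?_
    exact tendsto_one_div_add_atTop_nhds_zero_nat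
  have hpm : Tendsto y atTop
      (@nhds X (pm e hb).toUniformSpace.toTopologicalSpace x) :=
    (@tendsto_iff_dist_tendsto_zero X ℕ (pm e hb) y atTop x).mpr hd
  have hchars : ∀ k, Tendsto (fun n => e k (y n)) atTop (𝓝 (e k x)) :=
    fun k => char_tendsto e hb hpm k
  have htau : Tendsto y atTop (@nhds X τ x) := hconv y x hchars
  have hev : ∀ᶠ n in atTop, y n ∈ s :=
    htau.eventually_mem (hs.mem_nhds hx)
  obtain ⟨n, hn⟩ := hev.exists
  exact hy2 n hn

lemma compact_of_seq
    (hseq : ∀ z : ℕ → X, ∃ (a : X) (φ : ℕ → ℕ), StrictMono φ ∧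
      ∀ k, Tendsto (fun n => e k (z (φ n))) atTop (𝓝 (e k a))) :
    @CompactSpace X (rhoTopology e) := by
  rw [← topo_eq e hb]
  letI := pm e hb
  refine (compactSpace_iff_seqCompactSpace).mpr ⟨fun z _ => ?_⟩
  obtain ⟨a, φ, hφ, hconv⟩ := hseq z
  exact ⟨a, Set.mem_univ a, φ, hφ, tendsto_pm e hb (fun k => hconv k)⟩

end RhoAux
end Glue

namespace FellerAux

/-- Diagonal extraction: from any `[0,1]`-valued array extract a subsequence along which all
columns converge. -/
lemma exists_subseq_forall_tendsto (v : ℕ → ℕ → ℝ) (hb : ∀ n k, v n k ∈ Set.Icc (0:ℝ) 1) :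
    ∃ φ : ℕ → ℕ, StrictMono φ ∧ ∃ L : ℕ → ℝ,
      ∀ k, Tendsto (fun n => v (φ n) k) atTop (𝓝 (L k)) := by
  haveI : CompactSpace (Set.Icc (0:ℝ) 1) := isCompact_iff_compactSpace.mp isCompact_Icc
  set u : ℕ → ∀ _ : ℕ, Set.Icc (0:ℝ) 1 := fun n k => ⟨v n k, hb n k⟩ with hu
  obtain ⟨Lf, φ, hφ, hconv⟩ := CompactSpace.tendsto_subseq u
  refine ⟨φ, hφ, fun k => (Lf k : ℝ), fun k => ?_⟩
  have h1 : Tendsto (fun n => (u (φ n)) k) atTop (𝓝 (Lf k)) :=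
    ((continuous_apply k).tendsto Lf).comp hconv
  have h2 : Tendsto (fun n => ((u (φ n)) k : ℝ)) atTop (𝓝 (Lf k : ℝ)) :=
    (continuous_subtype_val.tendsto (Lf k)).comp h1
  exact h2

variable {M : Type*} [TopologicalSpace M] [CommMonoid M] [MeasurableSpace M]
  {S : Set (M → ℝ)} (hS : FellerClass M S) (e : ℕ → M → ℝ) (he : S = Set.range e)

include hS he

lemma mem_S (k : ℕ) : e k ∈ S := he ▸ ⟨k, rfl⟩

lemma exists_char_ne_zero (x : M) : ∃ k, e k x ≠ 0 := by
  by_contra h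
  push_neg at h
  have hc : Tendsto (fun _ : ℕ => x) atTop (cocompact M) := by
    rw [← hS.tendsto_zero_iff]
    intro χ hχ
    have hχ' : χ ∈ Set.range e := he ▸ hχ
    obtain ⟨k, rfl⟩ := hχ'
    simpa [h k] using (tendsto_const_nhds : Tendsto (fun _ : ℕ => (0:ℝ)) atTop (𝓝 0))
  have := (hasBasis_cocompact.tendsto_right_iff.mp hc) {x} isCompact_singleton
  obtain ⟨n, hn⟩ := this.exists
  exact hn rfl

lemma limit_of_chars (w : ℕ → M) (L : ℕ → ℝ)
    (hconv : ∀ k, Tendsto (fun n => e k (w n)) atTop (𝓝 (L k)))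
    (hne : ∃ k, L k ≠ 0) :
    ∃ a : M, Tendsto w atTop (𝓝 a) ∧ ∀ k, L k = e k a := by
  classical
  set ψ : (M → ℝ) → ℝ := fun χ => if h : ∃ k, e k = χ then L h.choose else 0 with hψdef
  have hψ : ∀ k, ψ (e k) = L k := by
    intro k
    have hex : ∃ j, e j = e k := ⟨k, rfl⟩
    have h1 : Tendsto (fun n => e hex.choose (w n)) atTop (𝓝 (L hex.choose)) :=
      hconv hex.choose
    rw [hex.choose_spec] at h1
    have h2 : L hex.choose = L k := tendsto_nhds_unique h1 (hconv k)
    simp only [hψdef, dif_pos hex]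
    exact h2
  have hmem : ∀ χ ∈ S, Tendsto (fun n => χ (w n)) atTop (𝓝 (ψ χ)) := by
    intro χ hχ
    have hχ' : χ ∈ Set.range e := he ▸ hχ
    obtain ⟨k, rfl⟩ := hχ'
    rw [hψ k]
    exact hconv k
  obtain ⟨k0, hk0⟩ := hne
  obtain ⟨a, ha, hval⟩ := hS.limit_exists w ψ hmem ⟨e k0, mem_S hS e he k0, by rwa [hψ k0]⟩
  exact ⟨a, ha, fun k => by rw [← hψ k]; exact hval (e k) (mem_S hS e he k)⟩

lemma char_sep [T2Space M] (x y : M) (h : ∀ k, e k x = e k y) : x = y := by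
  classical
  set w : ℕ → M := fun n => if Even n then x else y with hw
  have hconv : ∀ k, Tendsto (fun n => e k (w n)) atTop (𝓝 (e k x)) := by
    intro k
    have hcst : (fun n => e k (w n)) = fun _ => e k x := by
      funext n
      by_cases hn : Even n <;> simp [hw, hn, h k]
    rw [hcst]
    exact tendsto_const_nhds
  obtain ⟨k0, hk0⟩ := exists_char_ne_zero hS e he x
  obtain ⟨a, ha, _⟩ := limit_of_chars hS e he w _ hconv ⟨k0, hk0⟩
  have h2 : Tendsto (fun n : ℕ => 2 * n) atTop atTop :=
    tendsto_atTop_mono (fun n => by simp only [id_eq]; omega) tendsto_id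
  have h3 : Tendsto (fun n : ℕ => 2 * n + 1) atTop atTop :=
    tendsto_atTop_mono (fun n => by simp only [id_eq]; omega) tendsto_id
  have hx : Tendsto (fun n : ℕ => w (2 * n)) atTop (𝓝 a) := ha.comp h2
  have hy : Tendsto (fun n : ℕ => w (2 * n + 1)) atTop (𝓝 a) := ha.comp h3
  have hxc : (fun n : ℕ => w (2 * n)) = fun _ => x := by
    funext n; simp [hw, even_two_mul n]
  have hyc : (fun n : ℕ => w (2 * n + 1)) = fun _ => y := by
    funext n
    have : ¬ Even (2 * n + 1) := by simp [Nat.even_add_one, even_two_mul n]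
    simp [hw, this]
  rw [hxc] at hx
  rw [hyc] at hy
  have : x = a := tendsto_nhds_unique hx tendsto_const_nhds |>.symm ▸ rfl
  exact (tendsto_nhds_unique hx tendsto_const_nhds ▸
    (tendsto_nhds_unique hy tendsto_const_nhds : a = y) : x = y)

lemma hb_of (n : ℕ) (x : M) : e n x ∈ Set.Icc (0:ℝ) 1 :=
  hS.mem_Icc (e n) (mem_S hS e he n) x

lemma conv_of_chars [T2Space M] (w : ℕ → M) (a : M)
    (h : ∀ k, Tendsto (fun n => e k (w n)) atTop (𝓝 (e k a))) :
    Tendsto w atTop (𝓝 a) := by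
  obtain ⟨k0, hk0⟩ := exists_char_ne_zero hS e he a
  obtain ⟨b, hb', hLb⟩ := limit_of_chars hS e he w (fun k => e k a) h ⟨k0, hk0⟩
  have hab : a = b := char_sep hS e he a b (fun k => hLb k)
  rw [hab]
  exact hb'

lemma char_continuous [LocallyCompactSpace M] [SecondCountableTopology M] [T2Space M]
    (k : ℕ) : Continuous (e k) := by
  have hsc : SeqContinuous (e k) := by
    intro w a hwa
    apply tendsto_of_subseq_tendsto
    intro ns hns
    obtain ⟨φ, hφ, L, hLconv⟩ := exists_subseq_forall_tendsto
      (fun n j => e j (w (ns n))) (fun n j => hb_of hS e he j (w (ns n)))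
    have hsub : Tendsto (fun n => w (ns (φ n))) atTop (𝓝 a) :=
      hwa.comp (hns.comp hφ.tendsto_atTop)
    have hne : ∃ j, L j ≠ 0 := by
      by_contra hz
      push_neg at hz
      have hcc : Tendsto (fun n => w (ns (φ n))) atTop (cocompact M) := by
        rw [← hS.tendsto_zero_iff]
        intro χ hχ
        have hχ' : χ ∈ Set.range e := he ▸ hχ
        obtain ⟨j, rfl⟩ := hχ'
        have := hLconv j
        rwa [hz j] at this
      obtain ⟨K, hKc, hKn⟩ := exists_compact_mem_nhds a
      have h1 : ∀ᶠ n in atTop, w (ns (φ n)) ∈ K := hsub.eventually_mem hKn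
      have h2 : ∀ᶠ n in atTop, w (ns (φ n)) ∈ Kᶜ :=
        hasBasis_cocompact.tendsto_right_iff.mp hcc K hKc
      obtain ⟨n, hn1, hn2⟩ := (h1.and h2).exists
      exact hn2 hn1
    obtain ⟨b, hbconv, hLb⟩ := limit_of_chars hS e he _ L hLconv hne
    have hba : b = a := tendsto_nhds_unique hbconv hsub
    refine ⟨φ, ?_⟩
    have := hLconv k
    rw [hLb k, hba] at this
    exact this
  exact hsc.continuous

lemma option_seq [LocallyCompactSpace M] [SecondCountableTopology M] [T2Space M]
    (z : ℕ → Option M) :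
    ∃ (a : Option M) (φ : ℕ → ℕ), StrictMono φ ∧
      ∀ k, Tendsto (fun n => Option.elim (z (φ n)) 0 (e k)) atTop
        (𝓝 (Option.elim a 0 (e k))) := by
  classical
  set e' : ℕ → Option M → ℝ := fun n o => Option.elim o 0 (e n) with he'
  have hb' : ∀ n o, e' n o ∈ Set.Icc (0:ℝ) 1 := by
    intro n o
    cases o with
    | none => exact ⟨le_rfl, zero_le_one⟩
    | some m => exact hb_of hS e he n m
  obtain ⟨φ, hφ, L, hLconv⟩ := exists_subseq_forall_tendsto
    (fun n k => e' k (z n)) (fun n k => hb' k (z n))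
  by_cases hz : ∀ k, L k = 0
  · refine ⟨none, φ, hφ, fun k => ?_⟩
    have := hLconv k
    rw [hz k] at this
    simpa [he'] using this
  · push_neg at hz
    obtain ⟨k0, hk0⟩ := hz
    have hev : ∀ᶠ n in atTop, z (φ n) ≠ none := by
      by_contra hfr
      rw [Filter.not_eventually] at hfr
      have hfr0 : ∃ᶠ n in atTop, e' k0 (z (φ n)) = 0 := by
        apply hfr.mono
        intro n hn
        rw [not_not] at hn
        rw [hn]
        rfl
      have : L k0 = 0 :=
        tendsto_nhds_unique_of_frequently_eq (hLconv k0) tendsto_const_nhds hfr0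
      exact hk0 this
    set x : ℕ → M := fun n => (z (φ n)).getD 1 with hx
    have hxev : ∀ k, (fun n => e k (x n)) =ᶠ[atTop] fun n => e' k (z (φ n)) := by
      intro k
      apply hev.mono
      intro n hn
      match hzn : z (φ n) with
      | none => exact absurd hzn hn
      | some m => simp [hx, hzn, he']
    have hxconv : ∀ k, Tendsto (fun n => e k (x n)) atTop (𝓝 (L k)) :=
      fun k => (hLconv k).congr' (hxev k).symm
    obtain ⟨a, _, hLa⟩ := limit_of_chars hS e he x L hxconv ⟨k0, hk0⟩
    refine ⟨some a, φ, hφ, fun k => ?_⟩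
    have := hLconv k
    rw [hLa k] at this
    simpa [he'] using this

end FellerAux

/-- `(M, ρ_{M̃})` is a topological monoid (the monoid operation is
continuous for the topology induced by `ρ_{M̃}`), and `M* = M ∪ {∂∞}`
(realized as `Option M`, with `∞ = none`), equipped with the metric `ρ_{M̃}`
extended by `χ_n(∂∞) = 0`, is a compact space. -/
theorem FellerClass.rho_topMonoid_and_compact {M : Type*} [TopologicalSpace M] [CommMonoid M]
    [ContinuousMul M] [LocallyCompactSpace M] [SecondCountableTopology M] [T2Space M]
    [MeasurableSpace M] [BorelSpace M]
    {S : Set (M → ℝ)} (hS : FellerClass M S)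
    (e : ℕ → M → ℝ) (he : S = Set.range e) :
    (@Continuous (M × M) M
        (@instTopologicalSpaceProd M M (rhoTopology e) (rhoTopology e)) (rhoTopology e)
        fun p => p.1 * p.2) ∧
      @CompactSpace (Option M) (rhoTopology fun n z => Option.elim z 0 (e n)) := by
  have hb : ∀ n x, e n x ∈ Set.Icc (0:ℝ) 1 := FellerAux.hb_of hS e he
  have hteq : rhoTopology e = ‹TopologicalSpace M› :=
    le_antisymm
      (RhoAux.rho_le e hb ‹TopologicalSpace M›
        (fun w a h => FellerAux.conv_of_chars hS e he w a h))
      (RhoAux.tau_le e hb (fun k => FellerAux.char_continuous hS e he k))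
  constructor
  · rw [hteq]
    exact continuous_mul
  · refine RhoAux.compact_of_seq _ (fun n o => ?_)
      (fun z => FellerAux.option_seq hS e he z)
    cases o with
    | none => exact ⟨le_rfl, zero_le_one⟩
    | some m => exact hb n m
end

section
/- Let (M, M̃) be a Feller topological monoid and let μ and (μ_n)_{n≥1} be Borel probability measures on M. Suppose that for every χ ∈ M̃, ∫_M χ dμ_n → ∫_M χ dμ as n → ∞. Then μ_n converges weakly to μ both on (M, τ_{M̃}) and on (M, τ): for every bounded continuous real-valued function f (with respect to either topology), ∫_M f dμ_n → ∫_M f dμ. -/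
open Filter Topology MeasureTheory

/- ### Auxiliary material -/

/-- The embedding of `M` into `[0,1]^ℕ` given by the enumerated characters. -/
def jmap {M : Type*} (e : ℕ → M → ℝ) (hb : ∀ n x, e n x ∈ Set.Icc (0:ℝ) 1) :
    M → (ℕ → Set.Icc (0:ℝ) 1) := fun x n => ⟨e n x, hb n x⟩

lemma abs_sub_le_one_of_Icc {a b : ℝ} (ha : a ∈ Set.Icc (0:ℝ) 1) (hb : b ∈ Set.Icc (0:ℝ) 1) :
    |a - b| ≤ 1 := by
  rw [abs_sub_le_iff]
  constructor <;> [skip; skip] <;> [linarith [ha.1, ha.2, hb.1, hb.2]; linarith [ha.1, ha.2, hb.1, hb.2]]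

lemma summable_rho {M : Type*} (e : ℕ → M → ℝ) (hb : ∀ n x, e n x ∈ Set.Icc (0:ℝ) 1)
    (x y : M) : Summable (fun n => |e n x - e n y| / 2 ^ (n + 1)) := by
  apply Summable.of_nonneg_of_le (fun n => by positivity) (fun n => ?_)
    (summable_geometric_two.mul_left (1/2))
  have h1 : |e n x - e n y| ≤ 1 := abs_sub_le_one_of_Icc (hb n x) (hb n y)
  have h2 : (0:ℝ) < 2 ^ (n+1) := by positivity
  have h2 : (0:ℝ) < 2 ^ (n+1) := by positivity
  calc |e n x - e n y| / 2 ^ (n + 1) ≤ 1 / 2 ^ (n+1) := (div_le_div_iff_of_pos_right h2).2 h1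
    _ = 1/2 * (1/2)^n := by
        rw [pow_succ]
        field_simp
        rw [← mul_pow]; norm_num

lemma coord_le_rho {M : Type*} (e : ℕ → M → ℝ) (hb : ∀ n x, e n x ∈ Set.Icc (0:ℝ) 1)
    (n : ℕ) (x y : M) : |e n x - e n y| ≤ 2 ^ (n+1) * rhoDist e x y := by
  have h := Summable.le_tsum (summable_rho e hb x y) n (fun i _ => by positivity)
  rw [div_le_iff₀ (by positivity : (0:ℝ) < 2 ^ (n+1))] at h
  calc |e n x - e n y| ≤ rhoDist e x y * 2 ^ (n+1) := h
    _ = 2 ^ (n+1) * rhoDist e x y := mul_comm _ _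

lemma rhoDist_self {M : Type*} (e : ℕ → M → ℝ) (x : M) : rhoDist e x x = 0 := by
  simp [rhoDist]

/-- The topology induced from the product topology by `jmap`. -/
def tauI {M : Type*} (e : ℕ → M → ℝ) (hb : ∀ n x, e n x ∈ Set.Icc (0:ℝ) 1) :
    TopologicalSpace M :=
  TopologicalSpace.induced (jmap e hb) inferInstance

set_option maxHeartbeats 2000000 in
/-- if `μ` and `(μ_n)` are Borel probability measures on a Feller
topological monoid such that `∫ χ dμ_n → ∫ χ dμ` for every character `χ` of the
determining class, then `μ_n → μ` weakly with respect to both the metric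
topology `τ_{M̃}` and the original topology `τ`: for every bounded function `f`
continuous for either topology, `∫ f dμ_n → ∫ f dμ`. -/
theorem FellerClass.weak_convergence {M : Type*} [TopologicalSpace M] [CommMonoid M]
    [ContinuousMul M] [LocallyCompactSpace M] [SecondCountableTopology M] [T2Space M]
    [MeasurableSpace M] [BorelSpace M]
    {S : Set (M → ℝ)} (hS : FellerClass M S)
    (e : ℕ → M → ℝ) (he : S = Set.range e)
    (μ : Measure M) (μs : ℕ → Measure M)
    [IsProbabilityMeasure μ] [∀ n, IsProbabilityMeasure (μs n)]
    (h : ∀ χ ∈ S, Tendsto (fun n => ∫ x, χ x ∂(μs n)) atTop (𝓝 (∫ x, χ x ∂μ))) :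
    (∀ f : M → ℝ, @Continuous M ℝ (rhoTopology e) _ f → (∃ C : ℝ, ∀ x, |f x| ≤ C) →
        Tendsto (fun n => ∫ x, f x ∂(μs n)) atTop (𝓝 (∫ x, f x ∂μ))) ∧
      (∀ f : M → ℝ, Continuous f → (∃ C : ℝ, ∀ x, |f x| ≤ C) →
        Tendsto (fun n => ∫ x, f x ∂(μs n)) atTop (𝓝 (∫ x, f x ∂μ))) := by
  classical
  have hmemS : ∀ n, e n ∈ S := fun n => by rw [he]; exact Set.mem_range_self n
  have hb : ∀ n x, e n x ∈ Set.Icc (0:ℝ) 1 := fun n x => hS.mem_Icc _ (hmemS n) x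
  have hme : ∀ n, Measurable (e n) := fun n => hS.measurable _ (hmemS n)
  set j : M → (ℕ → Set.Icc (0:ℝ) 1) := jmap e hb with hjdef
  -- every point has a nonvanishing character
  have hpos : ∀ x : M, ∃ n, e n x ≠ 0 := by
    intro x
    by_contra hc
    push_neg at hc
    have h0 : ∀ χ ∈ S, Tendsto (fun _ : ℕ => χ x) atTop (𝓝 0) := by
      intro χ hχ
      rw [he] at hχ
      obtain ⟨n, rfl⟩ := hχ
      simpa [hc n] using (tendsto_const_nhds : Tendsto (fun _ : ℕ => (0:ℝ)) atTop (𝓝 0))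
    have hcc := (hS.tendsto_zero_iff (fun _ => x)).1 h0
    have hx : ({x}ᶜ : Set M) ∈ cocompact M :=
      mem_cocompact.2 ⟨{x}, isCompact_singleton, subset_rfl⟩
    have h6 : ∀ᶠ _k : ℕ in atTop, x ∈ ({x}ᶜ : Set M) := hcc hx
    simpa using h6.exists
  have hposlt : ∀ x : M, ∃ n, 0 < e n x := by
    intro x
    obtain ⟨n, hn⟩ := hpos x
    exact ⟨n, lt_of_le_of_ne (hb n x).1 (Ne.symm hn)⟩
  -- injectivity of j
  have hj_inj : Function.Injective j := by
    intro a b hab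
    have hcoord : ∀ n, e n a = e n b := by
      intro n
      have : (j a n : ℝ) = (j b n : ℝ) := by rw [hab]
      exact this
    set z : ℕ → M := fun k => if Even k then a else b with hz
    have hzt : ∀ χ ∈ S, Tendsto (fun k => χ (z k)) atTop (𝓝 (χ a)) := by
      intro χ hχ
      rw [he] at hχ
      obtain ⟨n, rfl⟩ := hχ
      have : ∀ k, e n (z k) = e n a := by
        intro k
        by_cases hk : Even k <;> simp [hz, hk, hcoord n]
      simpa [this] using (tendsto_const_nhds : Tendsto (fun _ : ℕ => e n a) atTop (𝓝 (e n a)))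
    obtain ⟨n₀, hn₀⟩ := hpos a
    obtain ⟨c, hc, -⟩ := hS.limit_exists z (fun χ => χ a) hzt ⟨e n₀, hmemS n₀, hn₀⟩
    have h2 : Tendsto (fun k : ℕ => 2 * k) atTop atTop :=
      tendsto_atTop_mono (fun k => by simp only [id_eq]; omega) tendsto_id
    have h3 : Tendsto (fun k : ℕ => 2 * k + 1) atTop atTop :=
      tendsto_atTop_mono (fun k => by simp only [id_eq]; omega) tendsto_id
    have hza : ∀ k : ℕ, z (2*k) = a := fun k => if_pos (even_two_mul k)
    have hzb : ∀ k : ℕ, z (2*k+1) = b := fun k => if_neg (by simp [Nat.even_add_one, parity_simps])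
    have hea : Tendsto (fun _ : ℕ => a) atTop (𝓝 c) := by
      have := hc.comp h2
      simpa [Function.comp_def, hza] using this
    have heb : Tendsto (fun _ : ℕ => b) atTop (𝓝 c) := by
      have := hc.comp h3
      simpa [Function.comp_def, hzb] using this
    have ha' : a = c := tendsto_nhds_unique tendsto_const_nhds hea
    have hb' : b = c := tendsto_nhds_unique tendsto_const_nhds heb
    rw [ha', hb']
  -- j is measurable
  have hjm : Measurable j := measurable_pi_lambda _ (fun n => (hme n).subtype_mk)
  -- the induced topology
  have hrho_ball_open : ∀ (x : M) (ε : ℝ), IsOpen[tauI e hb] {y | rhoDist e x y < ε} := by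
    intro x ε
    have hD : Continuous (fun p : (ℕ → Set.Icc (0:ℝ) 1) =>
        ∑' n, |e n x - (p n : ℝ)| / 2 ^ (n+1)) := by
      apply continuous_tsum (u := fun n => (1/2:ℝ)^n) ?_ summable_geometric_two ?_
      · intro n
        exact ((continuous_const.sub (continuous_subtype_val.comp (continuous_apply n))).abs).div_const _
      · intro n p
        rw [Real.norm_eq_abs, abs_of_nonneg (by positivity)]
        have h1 : |e n x - (p n : ℝ)| ≤ 1 := abs_sub_le_one_of_Icc (hb n x) (p n).2
        have h2 : (0:ℝ) < 2 ^ (n+1) := by positivity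
        calc |e n x - (p n : ℝ)| / 2 ^ (n + 1) ≤ 1 / 2 ^ (n+1) := (div_le_div_iff_of_pos_right h2).2 h1
          _ ≤ (1/2)^n := by
              rw [one_div_pow]
              exact one_div_le_one_div_of_le (by positivity)
                (pow_le_pow_right₀ (by norm_num) (Nat.le_succ n))
    have heq : {y | rhoDist e x y < ε}
        = j ⁻¹' {p | (∑' n, |e n x - (p n : ℝ)| / 2 ^ (n+1)) < ε} := rfl
    rw [heq]
    exact isOpen_induced_iff.2 ⟨_, isOpen_lt hD continuous_const, rfl⟩
  have htI_le : tauI e hb ≤ rhoTopology e := by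
    apply le_generateFrom
    rintro U ⟨x, ε, -, rfl⟩
    exact hrho_ball_open x ε
  -- the span of the characters together with the constant 1
  set V : Submodule ℝ (M → ℝ) := Submodule.span ℝ (insert (1 : M → ℝ) S) with hVdef
  have hVone : (1 : M → ℝ) ∈ V := Submodule.subset_span (Set.mem_insert _ _)
  have hVS : ∀ χ ∈ S, χ ∈ V := fun χ hχ => Submodule.subset_span (Set.mem_insert_iff.2 (Or.inr hχ))
  have hVprop : ∀ Q ∈ V, Integrable Q μ ∧ (∀ n, Integrable Q (μs n)) ∧
      Tendsto (fun n => ∫ x, Q x ∂μs n) atTop (𝓝 (∫ x, Q x ∂μ)) := by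
    intro Q hQ
    induction hQ using Submodule.span_induction with
    | mem Q hQg =>
      rcases Set.mem_insert_iff.1 hQg with h1 | hQS
      · subst h1
        refine ⟨integrable_const 1, fun n => integrable_const 1, ?_⟩
        have h1' : ∀ (ν : Measure M), IsProbabilityMeasure ν → (∫ x, (1 : M → ℝ) x ∂ν) = 1 := by
          intro ν hν
          simp
        rw [h1' μ inferInstance]
        have hn' : ∀ n, (∫ x, (1 : M → ℝ) x ∂μs n) = 1 := fun n => h1' (μs n) inferInstance
        simp only [hn']
        exact tendsto_const_nhds
      · have hmQ := hS.measurable Q hQS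
        have hint : ∀ (ν : Measure M), IsProbabilityMeasure ν → Integrable Q ν := by
          intro ν hν
          refine (integrable_const (1:ℝ)).mono' hmQ.aestronglyMeasurable ?_
          refine Eventually.of_forall fun x => ?_
          have hx := hS.mem_Icc Q hQS x
          rw [Real.norm_eq_abs, abs_of_nonneg hx.1]
          exact hx.2
        exact ⟨hint μ inferInstance, fun n => hint (μs n) inferInstance, h Q hQS⟩
    | zero =>
      refine ⟨integrable_zero _ _ _, fun n => integrable_zero _ _ _, ?_⟩
      simp only [Pi.zero_apply, integral_zero]
      exact tendsto_const_nhds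
    | add Q R hQm hRm ihQ ihR =>
      obtain ⟨hQ1, hQ2, hQ3⟩ := ihQ
      obtain ⟨hR1, hR2, hR3⟩ := ihR
      refine ⟨hQ1.add hR1, fun n => (hQ2 n).add (hR2 n), ?_⟩
      have heq : ∀ n, (∫ x, (Q + R) x ∂μs n) = (∫ x, Q x ∂μs n) + ∫ x, R x ∂μs n := by
        intro n
        simp only [Pi.add_apply]
        exact integral_add (hQ2 n) (hR2 n)
      have heq2 : (∫ x, (Q + R) x ∂μ) = (∫ x, Q x ∂μ) + ∫ x, R x ∂μ := by
        simp only [Pi.add_apply]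
        exact integral_add hQ1 hR1
      simp only [heq, heq2]
      exact hQ3.add hR3
    | smul c Q hQm ihQ =>
      obtain ⟨hQ1, hQ2, hQ3⟩ := ihQ
      refine ⟨hQ1.smul c, fun n => (hQ2 n).smul c, ?_⟩
      have heq : ∀ (ν : Measure M), (∫ x, (c • Q) x ∂ν) = c * ∫ x, Q x ∂ν := by
        intro ν
        simp only [Pi.smul_apply, smul_eq_mul]
        exact integral_const_mul c Q
      simp only [heq]
      exact hQ3.const_mul c
  -- V is closed under multiplication
  have hVmul : ∀ Q ∈ V, ∀ R ∈ V, Q * R ∈ V := by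
    intro Q hQ
    induction hQ using Submodule.span_induction with
    | mem Q hQg =>
      intro R hR
      induction hR using Submodule.span_induction with
      | mem R hRg =>
        apply Submodule.subset_span
        rcases Set.mem_insert_iff.1 hQg with h1 | hQS
        · subst h1
          rw [one_mul]
          exact hRg
        · rcases Set.mem_insert_iff.1 hRg with h2 | hRS
          · subst h2
            rw [mul_one]
            exact Set.mem_insert_iff.2 (Or.inr hQS)
          · exact Set.mem_insert_iff.2 (Or.inr (hS.mul_mem Q hQS R hRS))
      | zero =>
        rw [mul_zero]
        exact V.zero_mem
      | add R1 R2 hm1 hm2 ih1 ih2 =>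
        rw [mul_add]
        exact V.add_mem ih1 ih2
      | smul c R hm ih =>
        rw [mul_smul_comm]
        exact V.smul_mem c ih
    | zero =>
      intro R hR
      rw [zero_mul]
      exact V.zero_mem
    | add Q1 Q2 hm1 hm2 ih1 ih2 =>
      intro R hR
      rw [add_mul]
      exact V.add_mem (ih1 R hR) (ih2 R hR)
    | smul c Q hm ih =>
      intro R hR
      rw [smul_mul_assoc]
      exact V.smul_mem c (ih R hR)
  have hVpow : ∀ Q ∈ V, ∀ m : ℕ, Q ^ m ∈ V := by
    intro Q hQ m
    induction m with
    | zero => simpa [pow_zero] using hVone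
    | succ k ih =>
      rw [pow_succ]
      exact hVmul _ ih _ hQ
  have hVprod : ∀ (s : Finset ℕ) (F : ℕ → M → ℝ), (∀ i ∈ s, F i ∈ V) →
      (∏ i ∈ s, F i) ∈ V := by
    intro s F hF
    exact Finset.prod_induction F (· ∈ V) (fun a b ha hb => hVmul a ha b hb) hVone hF
  -- the tightness functions P m
  set P : ℕ → M → ℝ := fun m x => (∏ i ∈ Finset.range (m+1), (1 - e i x)) ^ m with hPdef
  have hPV : ∀ m, P m ∈ V := by
    intro m
    have heq : P m = (∏ i ∈ Finset.range (m+1), ((1 : M → ℝ) - e i)) ^ m := by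
      funext x
      simp [hPdef, Finset.prod_apply]
    rw [heq]
    exact hVpow _ (hVprod _ _ (fun i _ => V.sub_mem hVone (hVS _ (hmemS i)))) m
  have hprod01 : ∀ m x, (∏ i ∈ Finset.range (m+1), (1 - e i x)) ∈ Set.Icc (0:ℝ) 1 := by
    intro m x
    constructor
    · exact Finset.prod_nonneg (fun i _ => by linarith [(hb i x).2])
    · exact Finset.prod_le_one (fun i _ => by linarith [(hb i x).2]) (fun i _ => by linarith [(hb i x).1])
  have hP01 : ∀ m x, P m x ∈ Set.Icc (0:ℝ) 1 := by
    intro m x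
    exact ⟨pow_nonneg (hprod01 m x).1 m, pow_le_one₀ (hprod01 m x).1 (hprod01 m x).2⟩
  have hPmeas : ∀ m, Measurable (P m) := by
    intro m
    exact (Finset.measurable_prod _ (fun i _ => measurable_const.sub (hme i))).pow_const m
  have hPtend : Tendsto (fun m => ∫ x, P m x ∂μ) atTop (𝓝 0) := by
    have h0 : (0:ℝ) = ∫ _x : M, (0:ℝ) ∂μ := by simp
    rw [h0]
    apply tendsto_integral_of_dominated_convergence (fun _ => (1:ℝ))
      (fun m => (hPmeas m).aestronglyMeasurable) (integrable_const 1)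
    · intro m
      refine Eventually.of_forall fun x => ?_
      rw [Real.norm_eq_abs, abs_of_nonneg (hP01 m x).1]
      exact (hP01 m x).2
    · refine Eventually.of_forall fun x => ?_
      obtain ⟨n₀, hn₀⟩ := hposlt x
      have hub : ∀ m, n₀ ≤ m → P m x ≤ (1 - e n₀ x) ^ m := by
        intro m hm
        have hmem : n₀ ∈ Finset.range (m+1) := Finset.mem_range.2 (by omega)
        have h1 : (∏ i ∈ Finset.range (m+1), (1 - e i x)) ≤ 1 - e n₀ x := by
          rw [← Finset.mul_prod_erase _ _ hmem]
          calc (1 - e n₀ x) * ∏ i ∈ (Finset.range (m+1)).erase n₀, (1 - e i x)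
              ≤ (1 - e n₀ x) * 1 := by
                apply mul_le_mul_of_nonneg_left
                  (Finset.prod_le_one (fun i _ => by linarith [(hb i x).2])
                    (fun i _ => by linarith [(hb i x).1]))
                  (by linarith [(hb n₀ x).2])
            _ = 1 - e n₀ x := mul_one _
        exact pow_le_pow_left₀ (hprod01 m x).1 h1 m
      have htp : Tendsto (fun m => (1 - e n₀ x) ^ m) atTop (𝓝 0) :=
        tendsto_pow_atTop_nhds_zero_of_lt_one (r := 1 - e n₀ x)
          (by linarith [(hb n₀ x).2]) (by linarith)
      apply tendsto_of_tendsto_of_tendsto_of_le_of_le' (tendsto_const_nhds (x := (0:ℝ))) htp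
      · exact Eventually.of_forall fun m => (hP01 m x).1
      · filter_upwards [eventually_ge_atTop n₀] with m hm
        exact hub m hm
  -- classification of the closure of the range of j
  have hclos : ∀ p : (ℕ → Set.Icc (0:ℝ) 1), p ∈ closure (Set.range j) →
      p ∈ Set.range j ∨ ∀ n, (p n : ℝ) = 0 := by
    intro p hp
    obtain ⟨u, hu_mem, hu_tend⟩ := mem_closure_iff_seq_limit.1 hp
    choose y hy using hu_mem
    have hcoord : ∀ n, Tendsto (fun k => e n (y k)) atTop (𝓝 (p n : ℝ)) := by
      intro n
      have h1 : Tendsto (fun k => ((u k n : ℝ))) atTop (𝓝 (p n : ℝ)) :=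
        (continuous_subtype_val.tendsto _).comp (((continuous_apply n).tendsto _).comp hu_tend)
      apply h1.congr
      intro k
      rw [← hy k]
      rfl
    by_cases hz : ∀ n, (p n : ℝ) = 0
    · exact Or.inr hz
    · push_neg at hz
      obtain ⟨n₀, hn₀⟩ := hz
      set ψ : (M → ℝ) → ℝ := fun χ => if hχ : ∃ n, e n = χ then (p hχ.choose : ℝ) else 0 with hψ
      have hψe : ∀ n, ψ (e n) = (p n : ℝ) := by
        intro n
        have hex : ∃ m, e m = e n := ⟨n, rfl⟩
        rw [hψ]
        simp only
        rw [dif_pos hex]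
        have h1 : Tendsto (fun k => e n (y k)) atTop (𝓝 (p hex.choose : ℝ)) := by
          have h2 := hcoord hex.choose
          rwa [hex.choose_spec] at h2
        exact tendsto_nhds_unique h1 (hcoord n)
      have hψS : ∀ χ ∈ S, Tendsto (fun k => χ (y k)) atTop (𝓝 (ψ χ)) := by
        intro χ hχ
        rw [he] at hχ
        obtain ⟨n, rfl⟩ := hχ
        rw [hψe n]
        exact hcoord n
      obtain ⟨a, -, hval⟩ := hS.limit_exists y ψ hψS
        ⟨e n₀, hmemS n₀, by rw [hψe n₀]; exact hn₀⟩
      left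
      refine ⟨a, ?_⟩
      funext n
      apply Subtype.ext
      have hv := hval (e n) (hmemS n)
      rw [hψe n] at hv
      exact hv.symm
  -- main convergence for functions continuous in the induced topology
  have key : ∀ (f : M → ℝ) (C : ℝ), @Continuous M ℝ (tauI e hb) _ f → (∀ x, |f x| ≤ C) →
      Tendsto (fun n => ∫ x, f x ∂(μs n)) atTop (𝓝 (∫ x, f x ∂μ)) := by
    intro f C hfc hC
    have hC0 : (0:ℝ) ≤ C := le_trans (abs_nonneg _) (hC 1)
    have hfm : Measurable f := by
      apply measurable_of_isOpen
      intro U hU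
      have hop : IsOpen[tauI e hb] (f ⁻¹' U) :=
        (@continuous_def M ℝ (tauI e hb) _ f).1 hfc U hU
      obtain ⟨W, hW, hWe⟩ := isOpen_induced_iff.1 hop
      rw [← hWe]
      exact hjm hW.measurableSet
    have hfint : ∀ (ν : Measure M), IsProbabilityMeasure ν → Integrable f ν := by
      intro ν hν
      refine (integrable_const C).mono' hfm.aestronglyMeasurable ?_
      exact Eventually.of_forall fun x => by simpa [Real.norm_eq_abs] using hC x
    rw [Metric.tendsto_atTop]
    intro ε hε
    set ε' : ℝ := ε / (4 * C + 5) with hε'def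
    have hε'pos : 0 < ε' := div_pos hε (by linarith)
    obtain ⟨m, hm⟩ := (hPtend.eventually (gt_mem_nhds hε'pos)).exists
    set N : ℕ := (m+1) * m with hN
    set δ : ℝ := 1 / (2 * (N:ℝ) + 2) with hδdef
    have hδpos : 0 < δ := by positivity
    have hδle : δ ≤ 1/2 := by
      rw [hδdef, div_le_div_iff₀ (by positivity) (by norm_num)]
      have : (0:ℝ) ≤ (N:ℝ) := Nat.cast_nonneg N
      linarith
    have hδpow : (1:ℝ)/2 ≤ (1 - δ) ^ N := by
      have hber := one_add_mul_le_pow (a := -δ) (by linarith : (-2:ℝ) ≤ -δ) N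
      rw [show (1:ℝ) + -δ = 1 - δ by ring] at hber
      have hNδ : (N:ℝ) * δ ≤ 1/2 := by
        rw [hδdef, mul_one_div, div_le_div_iff₀ (by positivity) (by norm_num)]
        have : (0:ℝ) ≤ (N:ℝ) := Nat.cast_nonneg N
        linarith
      have : (1:ℝ) + (N:ℝ) * (-δ) = 1 - (N:ℝ) * δ := by ring
      rw [this] at hber
      linarith
    set θ : (ℕ → Set.Icc (0:ℝ) 1) → ℝ :=
      fun p => min 1 ((∑ i ∈ Finset.range (m+1), (p i : ℝ)) / δ) with hθdef
    have hθcont : Continuous θ :=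
      continuous_const.min ((continuous_finset_sum _ (fun i _ =>
        continuous_subtype_val.comp (continuous_apply i))).div_const δ)
    have hθ0 : ∀ p, 0 ≤ θ p := by
      intro p
      apply le_min zero_le_one
      exact div_nonneg (Finset.sum_nonneg fun i _ => (p i).2.1) hδpos.le
    have hθ1 : ∀ p, θ p ≤ 1 := fun p => min_le_left _ _
    have hθP : ∀ x : M, 1 - θ (j x) ≤ 2 * P m x := by
      intro x
      by_cases hcase : δ ≤ ∑ i ∈ Finset.range (m+1), e i x
      · have h1 : θ (j x) = 1 := by
          rw [hθdef]
          exact min_eq_left ((one_le_div hδpos).2 hcase)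
        rw [h1]
        have := (hP01 m x).1
        linarith
      · push_neg at hcase
        have hsm : ∀ i ∈ Finset.range (m+1), e i x < δ := by
          intro i hi
          have h2 := Finset.single_le_sum (f := fun i => e i x) (fun i _ => (hb i x).1) hi
          linarith
        have hPge : (1:ℝ)/2 ≤ P m x := by
          have h1 : (1 - δ) ^ (m+1) ≤ ∏ i ∈ Finset.range (m+1), (1 - e i x) := by
            have hpl := Finset.prod_le_prod (s := Finset.range (m+1)) (f := fun _ => 1 - δ)
              (g := fun i => 1 - e i x) (fun i _ => by show (0:ℝ) ≤ 1 - δ; linarith)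
              (fun i hi => by show (1:ℝ) - δ ≤ 1 - e i x; linarith [hsm i hi])
            simpa [Finset.prod_const, Finset.card_range] using hpl
          have h2 : ((1-δ)^(m+1))^m ≤ P m x :=
            pow_le_pow_left₀ (pow_nonneg (by linarith) _) h1 m
          calc (1:ℝ)/2 ≤ (1-δ)^N := hδpow
            _ = ((1-δ)^(m+1))^m := by rw [hN, pow_mul]
            _ ≤ P m x := h2
        have := hθ0 (j x)
        linarith
    -- the compact space L and the function H
    have hLc : CompactSpace (closure (Set.range j)) :=
      isCompact_iff_compactSpace.1 isClosed_closure.isCompact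
    set jL : M → closure (Set.range j) := fun x => ⟨j x, subset_closure ⟨x, rfl⟩⟩ with hjLdef
    set H : closure (Set.range j) → ℝ := fun q =>
      if hq : (q : ℕ → Set.Icc (0:ℝ) 1) ∈ Set.range j then f hq.choose * θ (q : _) else 0
      with hHdef
    have hHval : ∀ x : M, H (jL x) = f x * θ (j x) := by
      intro x
      have hq : j x ∈ Set.range j := ⟨x, rfl⟩
      rw [hHdef]
      simp only
      rw [dif_pos hq]
      have hxx : hq.choose = x := hj_inj hq.choose_spec
      rw [hxx]
    have hHcont : Continuous H := by
      apply continuous_iff_seqContinuous.2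
      intro u a hu
      have huK : Tendsto (fun k => ((u k : ℕ → Set.Icc (0:ℝ) 1))) atTop
          (𝓝 (a : ℕ → Set.Icc (0:ℝ) 1)) := (continuous_subtype_val.tendsto a).comp hu
      by_cases haq : (a : ℕ → Set.Icc (0:ℝ) 1) ∈ Set.range j
      · obtain ⟨x₀, hx₀⟩ := haq
        have haq : (a : ℕ → Set.Icc (0:ℝ) 1) ∈ Set.range j := ⟨x₀, hx₀⟩
        obtain ⟨n₀, hn₀⟩ := hposlt x₀
        have hacoord : ((a : ℕ → Set.Icc (0:ℝ) 1) n₀ : ℝ) = e n₀ x₀ := by rw [← hx₀]; rfl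
        have hcoordu : Tendsto (fun k => ((u k : ℕ → Set.Icc (0:ℝ) 1) n₀ : ℝ)) atTop
            (𝓝 ((a : ℕ → Set.Icc (0:ℝ) 1) n₀ : ℝ)) :=
          (continuous_subtype_val.tendsto _).comp (((continuous_apply n₀).tendsto _).comp huK)
        have hev : ∀ᶠ k in atTop, 0 < ((u k : ℕ → Set.Icc (0:ℝ) 1) n₀ : ℝ) :=
          hcoordu.eventually (eventually_gt_nhds (by rw [hacoord]; exact hn₀))
        have hevr : ∀ᶠ k in atTop, ((u k : ℕ → Set.Icc (0:ℝ) 1)) ∈ Set.range j := by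
          filter_upwards [hev] with k hk
          rcases hclos _ (u k).2 with hr | h0
          · exact hr
          · exact absurd (h0 n₀) (ne_of_gt hk)
        set xs : ℕ → M := fun k =>
          if hk : ((u k : ℕ → Set.Icc (0:ℝ) 1)) ∈ Set.range j then hk.choose else x₀ with hxs
        have hjxs : ∀ᶠ k in atTop, j (xs k) = (u k : ℕ → Set.Icc (0:ℝ) 1) := by
          filter_upwards [hevr] with k hk
          rw [hxs]
          simp only
          rw [dif_pos hk]
          exact hk.choose_spec
        have hxsl : Tendsto (fun k => j (xs k)) atTop (𝓝 (j x₀)) := by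
          rw [hx₀]
          exact huK.congr' (by filter_upwards [hjxs] with k hk; exact hk.symm)
        have hnI : @nhds M (tauI e hb) x₀ = Filter.comap j (𝓝 (j x₀)) := nhds_induced j x₀
        have hxsI : Tendsto xs atTop (@nhds M (tauI e hb) x₀) := by
          rw [hnI, tendsto_comap_iff]
          simpa [Function.comp_def] using hxsl
        have hfx : Tendsto (fun k => f (xs k)) atTop (𝓝 (f x₀)) :=
          ((@Continuous.tendsto M ℝ (tauI e hb) _ f hfc x₀).comp hxsI)
        have hθu : Tendsto (fun k => θ ((u k : ℕ → Set.Icc (0:ℝ) 1))) atTop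
            (𝓝 (θ (a : ℕ → Set.Icc (0:ℝ) 1))) := (hθcont.tendsto _).comp huK
        have hmain : Tendsto (fun k => f (xs k) * θ ((u k : ℕ → Set.Icc (0:ℝ) 1))) atTop
            (𝓝 (f x₀ * θ ((a : ℕ → Set.Icc (0:ℝ) 1)))) := hfx.mul hθu
        have hHa : H a = f x₀ * θ ((a : ℕ → Set.Icc (0:ℝ) 1)) := by
          rw [hHdef]
          simp only
          rw [dif_pos haq]
          have : haq.choose = x₀ := hj_inj (haq.choose_spec.trans hx₀.symm)
          rw [this]
        rw [hHa]
        refine Tendsto.congr' ?_ hmain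
        filter_upwards [hevr] with k hk
        have : H (u k) = f hk.choose * θ ((u k : ℕ → Set.Icc (0:ℝ) 1)) := by
          rw [hHdef]
          simp only
          rw [dif_pos hk]
        have hxsk : xs k = hk.choose := by
          rw [hxs]
          simp only
          rw [dif_pos hk]
        simp only [Function.comp_apply, this, hxsk]
      · have h0 : ∀ n, ((a : ℕ → Set.Icc (0:ℝ) 1) n : ℝ) = 0 := (hclos _ a.2).resolve_left haq
        have hHa : H a = 0 := by rw [hHdef]; simp only; rw [dif_neg haq]
        have hθa : θ ((a : ℕ → Set.Icc (0:ℝ) 1)) = 0 := by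
          rw [hθdef]
          simp only
          have hs0 : (∑ i ∈ Finset.range (m+1), ((a : ℕ → Set.Icc (0:ℝ) 1) i : ℝ)) = 0 :=
            Finset.sum_eq_zero fun i _ => h0 i
          rw [hs0, zero_div]
          exact min_eq_right zero_le_one
        have hθu : Tendsto (fun k => θ ((u k : ℕ → Set.Icc (0:ℝ) 1))) atTop (𝓝 0) := by
          have h9 := (hθcont.tendsto (a : ℕ → Set.Icc (0:ℝ) 1)).comp huK
          rwa [hθa] at h9
        rw [hHa]
        apply squeeze_zero_norm _ (by simpa using hθu.const_mul C)
        intro k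
        rw [Real.norm_eq_abs]
        by_cases hk : ((u k : ℕ → Set.Icc (0:ℝ) 1)) ∈ Set.range j
        · have hH : H (u k) = f hk.choose * θ ((u k : ℕ → Set.Icc (0:ℝ) 1)) := by
            rw [hHdef]; simp only; rw [dif_pos hk]
          rw [Function.comp_apply, hH, abs_mul, abs_of_nonneg (hθ0 _)]
          exact mul_le_mul_of_nonneg_right (hC _) (hθ0 _)
        · have hH : H (u k) = 0 := by rw [hHdef]; simp only; rw [dif_neg hk]
          rw [Function.comp_apply, hH, abs_zero]
          exact mul_nonneg hC0 (hθ0 _)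
    -- Stone-Weierstrass
    set coords : ℕ → C(closure (Set.range j), ℝ) := fun n =>
      ⟨fun q => ((q : ℕ → Set.Icc (0:ℝ) 1) n : ℝ),
        continuous_subtype_val.comp ((continuous_apply n).comp continuous_subtype_val)⟩
      with hcoords
    set A : Subalgebra ℝ C(closure (Set.range j), ℝ) := Algebra.adjoin ℝ (Set.range coords)
      with hAdef
    have hA_sep : A.SeparatesPoints := by
      intro p q hpq
      have hne : (p : ℕ → Set.Icc (0:ℝ) 1) ≠ (q : ℕ → Set.Icc (0:ℝ) 1) :=
        fun hcon => hpq (Subtype.ext hcon)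
      have hex : ∃ n, (p : ℕ → Set.Icc (0:ℝ) 1) n ≠ (q : ℕ → Set.Icc (0:ℝ) 1) n := by
        by_contra hcc
        push_neg at hcc
        exact hne (funext hcc)
      obtain ⟨n, hn⟩ := hex
      refine ⟨coords n, ⟨coords n, ?_, rfl⟩, ?_⟩
      · exact Algebra.subset_adjoin ⟨n, rfl⟩
      · exact fun hvv => hn (Subtype.ext hvv)
    have hAV : ∀ F : C(closure (Set.range j), ℝ), F ∈ A → (fun x => F (jL x)) ∈ V := by
      intro F hF
      induction hF using Algebra.adjoin_induction with
      | mem F hFmem =>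
        obtain ⟨n, rfl⟩ := hFmem
        have heq : (fun x => (coords n) (jL x)) = e n := by
          funext x; rfl
        rw [heq]
        exact hVS _ (hmemS n)
      | algebraMap r =>
        have heq : (fun x : M => (algebraMap ℝ C(closure (Set.range j), ℝ) r) (jL x))
            = r • (1 : M → ℝ) := by
          funext x
          simp [Algebra.algebraMap_eq_smul_one]
        rw [heq]
        exact V.smul_mem r hVone
      | add F G hFm hGm ihF ihG =>
        have heq : (fun x => (F + G) (jL x)) = (fun x => F (jL x)) + (fun x => G (jL x)) := by
          funext x; simp
        rw [heq]
        exact V.add_mem ihF ihG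
      | mul F G hFm hGm ihF ihG =>
        have heq : (fun x => (F * G) (jL x)) = (fun x => F (jL x)) * (fun x => G (jL x)) := by
          funext x; simp
        rw [heq]
        exact hVmul _ ihF _ ihG
    obtain ⟨⟨F, hFA⟩, hFnear⟩ :=
      ContinuousMap.exists_mem_subalgebra_near_continuous_of_separatesPoints A hA_sep H hHcont
        ε' hε'pos
    obtain ⟨hFi1, hFi2, hFt⟩ := hVprop _ (hAV F hFA)
    obtain ⟨hPi1, hPi2, hPt⟩ := hVprop _ (hPV m)
    have hptw : ∀ x : M, |f x - F (jL x)| ≤ 2 * C * P m x + ε' := by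
      intro x
      have h1 : |f x - f x * θ (j x)| ≤ C * (1 - θ (j x)) := by
        have heq : f x - f x * θ (j x) = f x * (1 - θ (j x)) := by ring
        rw [heq, abs_mul, abs_of_nonneg (by linarith [hθ1 (j x)] : (0:ℝ) ≤ 1 - θ (j x))]
        exact mul_le_mul_of_nonneg_right (hC x) (by linarith [hθ1 (j x)])
      have h2 : |f x * θ (j x) - F (jL x)| ≤ ε' := by
        have h3 := hFnear (jL x)
        rw [Real.norm_eq_abs, hHval x] at h3
        rw [abs_sub_comm]
        exact le_of_lt h3
      have h4 : C * (1 - θ (j x)) ≤ C * (2 * P m x) :=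
        mul_le_mul_of_nonneg_left (hθP x) hC0
      calc |f x - F (jL x)| ≤ |f x - f x * θ (j x)| + |f x * θ (j x) - F (jL x)| :=
            abs_sub_le _ _ _
        _ ≤ C * (1 - θ (j x)) + ε' := add_le_add h1 h2
        _ ≤ C * (2 * P m x) + ε' := by linarith
        _ = 2 * C * P m x + ε' := by ring
    have hest : ∀ (ν : Measure M), IsProbabilityMeasure ν → Integrable f ν →
        Integrable (fun x => F (jL x)) ν → Integrable (P m) ν →
        |(∫ x, f x ∂ν) - ∫ x, F (jL x) ∂ν| ≤ 2 * C * (∫ x, P m x ∂ν) + ε' := by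
      intro ν hν hi1 hi2 hi3
      rw [← integral_sub hi1 hi2]
      have h5 : |∫ x, (f x - F (jL x)) ∂ν| ≤ ∫ x, |f x - F (jL x)| ∂ν := by
        simpa [Real.norm_eq_abs] using norm_integral_le_integral_norm (fun x => f x - F (jL x)) (μ := ν)
      have h6 : (∫ x, |f x - F (jL x)| ∂ν) ≤ ∫ x, (2 * C * P m x + ε') ∂ν := by
        apply integral_mono (hi1.sub hi2).abs ((hi3.const_mul _).add (integrable_const _))
        intro x
        exact hptw x
      have h7 : (∫ x, (2 * C * P m x + ε') ∂ν) = 2 * C * (∫ x, P m x ∂ν) + ε' := by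
        rw [integral_add (hi3.const_mul _) (integrable_const _), integral_const_mul,
          integral_const]
        simp [measure_univ]
      linarith
    have hPev : ∀ᶠ n in atTop, (∫ x, P m x ∂μs n) < ε' := hPt.eventually (gt_mem_nhds hm)
    have hFev : ∀ᶠ n in atTop, |(∫ x, F (jL x) ∂μs n) - ∫ x, F (jL x) ∂μ| < ε' := by
      rw [Metric.tendsto_atTop] at hFt
      obtain ⟨N₀, hN₀⟩ := hFt ε' hε'pos
      rw [eventually_atTop]
      exact ⟨N₀, fun n hn => by rw [← Real.dist_eq]; exact hN₀ n hn⟩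
    obtain ⟨N₁, hN₁⟩ := eventually_atTop.1 (hPev.and hFev)
    refine ⟨N₁, fun n hn => ?_⟩
    obtain ⟨ha1, ha2⟩ := hN₁ n hn
    have e1 := hest (μs n) inferInstance (hfint _ inferInstance) (hFi2 n) (hPi2 n)
    have e2 := hest μ inferInstance (hfint _ inferInstance) hFi1 hPi1
    rw [Real.dist_eq]
    have tb := abs_sub_le (∫ x, f x ∂μs n) (∫ x, F (jL x) ∂μs n) (∫ x, f x ∂μ)
    have tc := abs_sub_le (∫ x, F (jL x) ∂μs n) (∫ x, F (jL x) ∂μ) (∫ x, f x ∂μ)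
    have e2' : |(∫ x, F (jL x) ∂μ) - ∫ x, f x ∂μ| ≤ 2 * C * (∫ x, P m x ∂μ) + ε' := by
      rw [abs_sub_comm]
      exact e2
    have hm1 : 2 * C * (∫ x, P m x ∂μs n) ≤ 2 * C * ε' :=
      mul_le_mul_of_nonneg_left ha1.le (by linarith)
    have hm2 : 2 * C * (∫ x, P m x ∂μ) ≤ 2 * C * ε' :=
      mul_le_mul_of_nonneg_left hm.le (by linarith)
    have hfin : (4 * C + 5) * ε' = ε := by
      rw [hε'def]
      field_simp
    linarith
  -- every τ-continuous function is ρ-continuous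
  have hτρ : ∀ f : M → ℝ, Continuous f → @Continuous M ℝ (rhoTopology e) _ f := by
    intro f hf
    apply (@continuous_def M ℝ (rhoTopology e) _ f).2
    intro U hU
    have hballmem : ∀ x ∈ f ⁻¹' U, ∃ ε > (0:ℝ), ∀ y, rhoDist e x y < ε → f y ∈ U := by
      intro x hx
      by_contra hcon
      push_neg at hcon
      have hseq : ∀ k : ℕ, ∃ y, rhoDist e x y < 1/((k:ℝ)+1) ∧ f y ∉ U := by
        intro k
        obtain ⟨y, hy1, hy2⟩ := hcon (1/((k:ℝ)+1)) (by positivity)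
        exact ⟨y, hy1, hy2⟩
      choose y hy1 hy2 using hseq
      have hcoordy : ∀ n, Tendsto (fun k => e n (y k)) atTop (𝓝 (e n x)) := by
        intro n
        have hb1 : ∀ k : ℕ, |e n x - e n (y k)| ≤ 2^(n+1) * (1/((k:ℝ)+1)) := by
          intro k
          calc |e n x - e n (y k)| ≤ 2^(n+1) * rhoDist e x (y k) := coord_le_rho e hb n x (y k)
            _ ≤ 2^(n+1) * (1/((k:ℝ)+1)) :=
                mul_le_mul_of_nonneg_left (hy1 k).le (by positivity)
        have hgl : Tendsto (fun k : ℕ => (2:ℝ)^(n+1) * (1/((k:ℝ)+1))) atTop (𝓝 0) := by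
          have h9 := tendsto_one_div_add_atTop_nhds_zero_nat.const_mul ((2:ℝ)^(n+1))
          simpa using h9
        have hdiff : Tendsto (fun k => e n x - e n (y k)) atTop (𝓝 0) := by
          apply squeeze_zero_norm _ hgl
          intro k
          rw [Real.norm_eq_abs]
          exact hb1 k
        have h10 := (tendsto_const_nhds (x := e n x) (f := atTop (α := ℕ))).sub hdiff
        simpa using h10
      have hψ : ∀ χ ∈ S, Tendsto (fun k => χ (y k)) atTop (𝓝 (χ x)) := by
        intro χ hχ
        rw [he] at hχ
        obtain ⟨n, rfl⟩ := hχ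
        exact hcoordy n
      obtain ⟨n₀, hn₀⟩ := hpos x
      obtain ⟨a, hconv, hval⟩ := hS.limit_exists y (fun χ => χ x) hψ ⟨e n₀, hmemS n₀, hn₀⟩
      have hax : a = x := by
        apply hj_inj
        funext n
        apply Subtype.ext
        exact (hval (e n) (hmemS n)).symm
      rw [hax] at hconv
      have hev : Tendsto (fun k => f (y k)) atTop (𝓝 (f x)) := (hf.tendsto x).comp hconv
      have hevU : ∀ᶠ k in atTop, f (y k) ∈ U := hev (hU.mem_nhds hx)
      obtain ⟨k, hk⟩ := hevU.exists
      exact hy2 k hk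
    choose! εx hεpos hεsub using hballmem
    have hUeq : f ⁻¹' U = ⋃ x ∈ f ⁻¹' U, {y | rhoDist e x y < εx x} := by
      ext z
      simp only [Set.mem_iUnion, Set.mem_setOf_eq]
      constructor
      · intro hz
        exact ⟨z, hz, by rw [rhoDist_self]; exact hεpos z hz⟩
      · rintro ⟨x, hx, hlt⟩
        exact hεsub x hx z hlt
    rw [hUeq]
    refine @isOpen_biUnion M _ (rhoTopology e) _ _ ?_
    intro x hx
    exact TopologicalSpace.isOpen_generateFrom_of_mem ⟨x, εx x, hεpos x hx, rfl⟩
  constructor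
  · intro f hf hCb
    obtain ⟨C, hC⟩ := hCb
    exact key f C (continuous_le_dom htI_le hf) hC
  · intro f hf hCb
    obtain ⟨C, hC⟩ := hCb
    exact key f C (continuous_le_dom htI_le (hτρ f hf)) hC
end
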